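/- Let M be an (n+m)×(n'+m') block matrix with blocks M11 (n×n'), M12, M21, M22. If n' ≥ n and N is an m×n matrix with N·M11 = M21, then M equals the product of the block matrices [[I_n, 0],[N, I_m]], [[I_{n,n'}, 0],[0, M22 - N·M12]], and [[I_{n',n}·M11, I_{n',n}·M12],[0, I_{m'}]]. -/

import Mathlib

/-- The `p × q` "defective identity" matrix with `(i,j)` entry `1` if `i = j` and `0` otherwise. -/
def defId (R : Type*) [CommRing R] (p q : ℕ) : Matrix (Fin p) (Fin q) R :=
  Matrix.of fun i j => if (i : ℕ) = (j : ℕ) then 1 else 0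

lemma defId_mul_defId {R : Type*} [CommRing R] {n n' : ℕ} (hge : n ≤ n') :
    defId R n n' * defId R n' n = 1 := by
  ext i j
  simp only [Matrix.mul_apply, defId, Matrix.of_apply]
  rw [Finset.sum_eq_single (⟨(i : ℕ), lt_of_lt_of_le i.2 hge⟩ : Fin n')]
  · simp [Matrix.one_apply, Fin.ext_iff]
  · intro k _ hk
    have : (i : ℕ) ≠ (k : ℕ) := fun h => hk (by simp [Fin.ext_iff, ← h])
    simp [this]
  · simp

theorem stmt1 {R : Type*} [CommRing R] {n m n' m' : ℕ}
    (M11 : Matrix (Fin n) (Fin n') R) (M12 : Matrix (Fin n) (Fin m') R)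
    (M21 : Matrix (Fin m) (Fin n') R) (M22 : Matrix (Fin m) (Fin m') R)
    (N : Matrix (Fin m) (Fin n) R)
    (hge : n ≤ n') (hN : N * M11 = M21) :
    Matrix.fromBlocks M11 M12 M21 M22 =
      Matrix.fromBlocks (1 : Matrix (Fin n) (Fin n) R) 0 N (1 : Matrix (Fin m) (Fin m) R) *
        Matrix.fromBlocks (defId R n n') 0 0 (M22 - N * M12) *
        Matrix.fromBlocks (defId R n' n * M11) (defId R n' n * M12) 0 (1 : Matrix (Fin m') (Fin m') R) := by
  have h11 : defId R n n' * (defId R n' n * M11) = M11 := by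
    rw [← Matrix.mul_assoc, defId_mul_defId hge, Matrix.one_mul]
  have h12 : defId R n n' * (defId R n' n * M12) = M12 := by
    rw [← Matrix.mul_assoc, defId_mul_defId hge, Matrix.one_mul]
  rw [Matrix.fromBlocks_multiply, Matrix.fromBlocks_multiply]
  simp only [Matrix.one_mul, Matrix.mul_zero, Matrix.zero_mul, Matrix.mul_one,
    add_zero, zero_add, Matrix.mul_assoc, h11, h12, hN]
  simp [hN]
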